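/- Let q be a real number with q > 0 and q ≠ 1. Then for all integers r ≥ 1, N ≥ 1 and k ≥ 0, Σ_{i=0}^{N−1} q^{i·r} · [i]_k = (Σ_{ℓ=0}^{r−1} q^{(r−ℓ−1)·N + (ℓ+1)·k} · [r−1]_ℓ / [k+r]_{ℓ+1}) · [N]_{k+1}. -/

import Mathlib

/-!
Let `D_l = q^((l+1)k) [r-1]_l / [k+r]_{l+1}` and `C(x) = ∑_{l<r} D_l x^(r-1-l)`, so that the
right-hand side is `C(q^N)·[N]_{k+1}`. Since `[N+1]_{k+1} = [N+1]·[N]_k` and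
`[N]_{k+1} = [N]_k·[N-k]`, induction on `N` (from the trivial case `N = 0`) reduces the identity
to `C(q^(N+1))·[N+1] - C(q^N)·[N-k] = q^(N r)`. With `x = q^N` and `a = q^k` this is the
q-difference equation `a C(qx)(qx - 1) - C(x)(x - a) = a(q-1) x^r`, which holds because the
first-order recurrence `(a q^(r-l-1) - 1) D_{l+1} = a (q^(r-l-1) - 1) D_l` makes the comparison of
coefficients telescope.
-/

open Finset

noncomputable def qb (q x : ℝ) : ℝ := (q ^ x - 1) / (q - 1)

noncomputable def qff (q x : ℝ) (m : ℕ) : ℝ := ∏ j ∈ range m, qb q (x - j)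

lemma q_difference_of_coeff_recurrence {q a x : ℝ} {r : ℕ} (hr : 0 < r) (D : ℕ → ℝ)
    (hD0 : (a * q ^ r - 1) * D 0 = a * (q - 1))
    (hD : ∀ l < r, (a * q ^ (r - l - 1) - 1) * D (l + 1) = a * (q ^ (r - l - 1) - 1) * D l) :
    a * (∑ l ∈ range r, (q * x) ^ (r - l - 1) * D l) * (q * x - 1)
      - (∑ l ∈ range r, x ^ (r - l - 1) * D l) * (x - a) = a * (q - 1) * x ^ r := by
  obtain ⟨E, hE⟩ : ∃ E : ℕ → ℝ, ∀ l, E l = x ^ (r - l) * (a * q ^ (r - l) - 1) * D l :=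
    ⟨_, fun _ => rfl⟩
  have hterm : ∀ l < r,
      (a * (q * x) ^ (r - l - 1) * (q * x - 1) - x ^ (r - l - 1) * (x - a)) * D l
        = E l - E (l + 1) := by
    intro l hl
    have hrec := hD l hl
    obtain ⟨m, hm⟩ : ∃ m, r - l = m + 1 := ⟨r - l - 1, by omega⟩
    rw [hm, Nat.add_sub_cancel] at hrec ⊢
    rw [hE, hE, hm, show r - (l + 1) = m by omega]
    linear_combination x ^ m * hrec
  have hEr : E r = 0 := by
    obtain ⟨l, rfl⟩ : ∃ l, r = l + 1 := ⟨r - 1, by omega⟩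
    have hrec := hD l l.lt_succ_self
    rw [Nat.add_sub_cancel_left, Nat.sub_self, pow_zero, mul_one, sub_self, mul_zero,
      zero_mul] at hrec
    rw [hE, Nat.sub_self, pow_zero, pow_zero, mul_one, one_mul, hrec]
  calc a * (∑ l ∈ range r, (q * x) ^ (r - l - 1) * D l) * (q * x - 1)
        - (∑ l ∈ range r, x ^ (r - l - 1) * D l) * (x - a)
      = ∑ l ∈ range r,
          (a * (q * x) ^ (r - l - 1) * (q * x - 1) - x ^ (r - l - 1) * (x - a)) * D l := by
        rw [mul_sum, sum_mul, sum_mul, ← sum_sub_distrib]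
        exact sum_congr rfl fun _ _ => by ring
    _ = ∑ l ∈ range r, (E l - E (l + 1)) := sum_congr rfl fun l hl => hterm l (mem_range.1 hl)
    _ = E 0 - E r := sum_range_sub' E r
    _ = a * (q - 1) * x ^ r := by
        rw [hEr, sub_zero, hE, Nat.sub_zero, mul_assoc, hD0]
        ring

lemma pow_ne_one_of_pos {q : ℝ} (hq : 0 < q) (hq1 : q ≠ 1) {n : ℕ} (hn : n ≠ 0) : q ^ n ≠ 1 :=
  fun h => hq1 ((pow_eq_one_iff_of_nonneg hq.le hn).1 h)

lemma qb_zero (q : ℝ) : qb q 0 = 0 := by simp [qb]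

lemma qb_natCast (q : ℝ) (n : ℕ) : qb q n = (q ^ n - 1) / (q - 1) := by
  rw [qb, Real.rpow_natCast]

lemma qb_natCast_sub_natCast {q : ℝ} (hq : 0 < q) (n k : ℕ) :
    qb q ((n : ℝ) - k) = (q ^ n / q ^ k - 1) / (q - 1) := by
  rw [qb, Real.rpow_sub hq, Real.rpow_natCast, Real.rpow_natCast]

lemma qff_succ (q x : ℝ) (m : ℕ) : qff q x (m + 1) = qff q x m * qb q (x - m) :=
  prod_range_succ _ _

lemma qff_succ' (q x : ℝ) (m : ℕ) : qff q x (m + 1) = qb q x * qff q (x - 1) m := by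
  rw [qff, prod_range_succ', Nat.cast_zero, sub_zero, mul_comm, qff]
  congr 1
  exact prod_congr rfl fun j _ => by push_cast; ring_nf

lemma qff_zero_succ (q : ℝ) (m : ℕ) : qff q 0 (m + 1) = 0 := by
  rw [qff_succ', qb_zero, zero_mul]

noncomputable def qffCoeff (q : ℝ) (r k l : ℕ) : ℝ :=
  q ^ ((l + 1) * k) * qff q ((r : ℝ) - 1) l / qff q ((k : ℝ) + r) (l + 1)

noncomputable def qffCoeffSum (q : ℝ) (r k N : ℕ) : ℝ :=
  ∑ l ∈ range r,
    q ^ ((r - l - 1) * N + (l + 1) * k) * qff q ((r : ℝ) - 1) l / qff q ((k : ℝ) + r) (l + 1)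

lemma qffCoeffSum_eq (q : ℝ) (r k N : ℕ) :
    qffCoeffSum q r k N = ∑ l ∈ range r, (q ^ N) ^ (r - l - 1) * qffCoeff q r k l := by
  refine sum_congr rfl fun l _ => ?_
  rw [qffCoeff, pow_add, ← pow_mul, mul_comm N]
  ring

section
variable {q : ℝ} (hq : 0 < q) (hq1 : q ≠ 1)
include hq hq1

lemma qffCoeff_zero_mul {r : ℕ} (k : ℕ) (hr : 0 < r) :
    (q ^ k * q ^ r - 1) * qffCoeff q r k 0 = q ^ k * (q - 1) := by
  have hkr : q ^ k * q ^ r - 1 ≠ 0 :=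
    sub_ne_zero.2 (pow_add q k r ▸ pow_ne_one_of_pos hq hq1 (by omega))
  have hq1' : q - 1 ≠ 0 := sub_ne_zero.2 hq1
  rw [qffCoeff, qff_succ', show (k : ℝ) + r = ((k + r : ℕ) : ℝ) by push_cast; rfl, qb_natCast,
    qff, qff, prod_range_zero, prod_range_zero, zero_add, one_mul, pow_add]
  field_simp

lemma qffCoeff_succ_mul (r k : ℕ) {l : ℕ} (hl : l < r) :
    (q ^ k * q ^ (r - l - 1) - 1) * qffCoeff q r k (l + 1)
      = q ^ k * (q ^ (r - l - 1) - 1) * qffCoeff q r k l := by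
  have hsucc : qffCoeff q r k (l + 1) = q ^ k * qffCoeff q r k l
      * (qb q ((r : ℝ) - 1 - l) / qb q ((k : ℝ) + r - (l + 1 : ℕ))) := by
    rw [qffCoeff, qffCoeff, qff_succ, qff_succ _ _ (l + 1),
      show (l + 1 + 1) * k = k + (l + 1) * k by ring, pow_add]
    ring
  have hcast : ((r - l - 1 : ℕ) : ℝ) = r - l - 1 := by
    rw [Nat.cast_sub (by omega), Nat.cast_sub hl.le, Nat.cast_one]
  rw [hsucc, show (r : ℝ) - 1 - l = ((r - l - 1 : ℕ) : ℝ) by rw [hcast]; ring,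
    show (k : ℝ) + r - (l + 1 : ℕ) = ((k + (r - l - 1) : ℕ) : ℝ) by push_cast [hcast]; ring,
    qb_natCast, qb_natCast, pow_add]
  have hq1' : q - 1 ≠ 0 := sub_ne_zero.2 hq1
  rcases Nat.eq_zero_or_pos (r - l - 1) with h0 | hpos
  · simp [h0]
  · have hden : q ^ k * q ^ (r - l - 1) - 1 ≠ 0 :=
      sub_ne_zero.2 (pow_add q k _ ▸ pow_ne_one_of_pos hq hq1 (by omega))
    field_simp

lemma qffCoeffSum_succ_mul_sub {r : ℕ} (k N : ℕ) (hr : 0 < r) :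
    qffCoeffSum q r k (N + 1) * qb q ((N : ℝ) + 1) - qffCoeffSum q r k N * qb q ((N : ℝ) - k)
      = q ^ (N * r) := by
  have hdiff := q_difference_of_coeff_recurrence (x := q ^ N) hr (qffCoeff q r k)
    (qffCoeff_zero_mul hq hq1 k hr) fun l hl => qffCoeff_succ_mul hq hq1 r k hl
  rw [← qffCoeffSum_eq, ← pow_succ', ← qffCoeffSum_eq] at hdiff
  have hqk : q ^ k ≠ 0 := pow_ne_zero k hq.ne'
  have hq1' : q - 1 ≠ 0 := sub_ne_zero.2 hq1
  rw [show (N : ℝ) + 1 = ((N + 1 : ℕ) : ℝ) by push_cast; rfl, qb_natCast,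
    qb_natCast_sub_natCast hq, pow_mul]
  field_simp
  linear_combination hdiff

lemma sum_range_pow_mul_qff {r : ℕ} (k : ℕ) (hr : 0 < r) (N : ℕ) :
    ∑ i ∈ range N, q ^ (i * r) * qff q (i : ℝ) k
      = qffCoeffSum q r k N * qff q (N : ℝ) (k + 1) := by
  induction N with
  | zero => rw [sum_range_zero, Nat.cast_zero, qff_zero_succ, mul_zero]
  | succ N ih =>
    rw [sum_range_succ, ih, qff_succ _ _ k, Nat.cast_succ, qff_succ', add_sub_cancel_right]
    linear_combination -qff q N k * qffCoeffSum_succ_mul_sub hq hq1 k N hr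

end

theorem sum_of_q_falling_factorials (q : ℝ) (hq : 0 < q) (hq1 : q ≠ 1) :
    ∀ r N k : ℕ, 1 ≤ r → 1 ≤ N →
      ∑ i ∈ range N, q ^ (i * r) * qff q (i : ℝ) k
        = (∑ l ∈ range r,
            q ^ ((r - l - 1) * N + (l + 1) * k) *
              qff q ((r : ℝ) - 1) l / qff q ((k : ℝ) + r) (l + 1))
          * qff q (N : ℝ) (k + 1) :=
  fun _ N k hr _ => sum_range_pow_mul_qff hq hq1 k hr N
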